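/- arXiv:2301.10160 — 4 statements merged into one kernel-verified Lean document; each statement's English description precedes it below -/
import Mathlib

section
/- Let g ≥ 4 and suppose the linear s-uniform hypergraph H has no Berge cycle of length at most g. Then every path P = (v_1, …, v_ℓ) in G with ℓ ≤ g vertices is good. -/
open SimpleGraph

/-- The hypergraph `H` has no Berge cycle of length `t` with `2 ≤ t ≤ g`. -/
def BergeCycleFreeUpTo {V : Type*} (H : Set (Finset V)) (g : ℕ) : Prop :=
  ¬ ∃ t : ℕ, 2 ≤ t ∧ t ≤ g ∧
    ∃ (v : ZMod t → V) (e : ZMod t → Finset V),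
      Function.Injective v ∧ Function.Injective e ∧ (∀ i, e i ∈ H) ∧
      ∀ i, v i ∈ e (i - 1) ∧ v i ∈ e i

/-- A path (walk) `P` in `G` is good with respect to the hypergraph `H` and the
assignment `h` of hyperedges to edges: (i) for distinct edges `e, e'` of `P` the
hyperedges `h e` and `h e'` intersect exactly in the common endpoints of `e` and `e'`;
(ii) no hyperedge of `H` other than those assigned to the edges of `P` meets the
union of the assigned hyperedges in more than one vertex. -/
def IsGoodPath {V : Type*} [DecidableEq V] (H : Set (Finset V))
    {G : SimpleGraph V} (h : Sym2 V → Finset V) {u v : V} (P : G.Walk u v) : Prop :=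
  (∀ e ∈ P.edges, ∀ e' ∈ P.edges, e ≠ e' →
      ∀ x : V, (x ∈ h e ∧ x ∈ h e') ↔ (x ∈ e ∧ x ∈ e')) ∧
  (∀ f ∈ H, (∀ e ∈ P.edges, f ≠ h e) →
      ∀ x y : V, x ∈ f → y ∈ f →
        (∃ e ∈ P.edges, x ∈ h e) → (∃ e' ∈ P.edges, y ∈ h e') → x = y)

/-- Build a Berge cycle from ℕ-indexed data. -/
lemma buildBergeCycle {V : Type} {H : Set (Finset V)} {g : ℕ}
    (hgirth : BergeCycleFreeUpTo H g) (t : ℕ) (ht2 : 2 ≤ t) (htg : t ≤ g)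
    (w : ℕ → V) (f : ℕ → Finset V)
    (hwinj : ∀ a < t, ∀ b < t, w a = w b → a = b)
    (hfinj : ∀ a < t, ∀ b < t, f a = f b → a = b)
    (hfH : ∀ k < t, f k ∈ H)
    (hwk : ∀ k < t, w k ∈ f k)
    (hwk1 : ∀ k, k + 1 < t → w (k + 1) ∈ f k)
    (hw0 : w 0 ∈ f (t - 1)) : False := by
  obtain ⟨m, rfl⟩ : ∃ m, t = m + 1 := ⟨t - 1, by omega⟩
  apply hgirth
  refine ⟨m + 1, ht2, htg, fun i => w i.val, fun i => f i.val, ?_, ?_, ?_, ?_⟩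
  · intro a b hab
    exact ZMod.val_injective _ (hwinj _ a.val_lt _ b.val_lt hab)
  · intro a b hab
    exact ZMod.val_injective _ (hfinj _ a.val_lt _ b.val_lt hab)
  · intro i; exact hfH _ i.val_lt
  · intro i
    refine ⟨?_, hwk _ i.val_lt⟩
    show w i.val ∈ f (i - 1).val
    have hival : ((i.val : ℕ) : ZMod (m + 1)) = i := ZMod.natCast_zmod_val i
    rcases Nat.eq_zero_or_pos i.val with h0 | hpos
    · have hi0 : i = 0 := by rw [← hival, h0, Nat.cast_zero]
      have hneg : i - 1 = -1 := by rw [hi0]; ring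
      rw [h0, hneg, ZMod.val_neg_one]
      simpa using hw0
    · obtain ⟨k, hk⟩ : ∃ k, i.val = k + 1 := ⟨i.val - 1, by omega⟩
      have hlt : k < m + 1 := by have := i.val_lt; omega
      have hi1 : i - 1 = ((k : ℕ) : ZMod (m + 1)) := by
        rw [← hival, hk]; push_cast; ring
      rw [hi1, ZMod.val_cast_of_lt hlt, hk]
      have hvlt : i.val < m + 1 := i.val_lt
      exact hwk1 k (by omega)

section Shapes

variable {V : Type} {H : Set (Finset V)} {g n : ℕ}
  (hgirth : BergeCycleFreeUpTo H g) (hlen : n + 1 ≤ g)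
  (p : ℕ → V) (F : ℕ → Finset V)
  (hpinj : ∀ a ≤ n, ∀ b ≤ n, p a = p b → a = b)
  (hFinj : ∀ i < n, ∀ j < n, F i = F j → i = j)
  (hFH : ∀ i < n, F i ∈ H)
  (hv1 : ∀ i < n, p i ∈ F i) (hv2 : ∀ i < n, p (i + 1) ∈ F i)

include hgirth hlen hpinj hFinj hFH hv1 hv2

/-- Shape 1: a run of path vertices `p a, …, p b` closed by a hyperedge `C`
containing `p a` and `p b`. -/
lemma shape1 (a b : ℕ) (hab : a < b) (hbn : b ≤ n)
    (C : Finset V) (hC : C ∈ H) (hCne : ∀ k, a ≤ k → k < b → C ≠ F k)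
    (ha : p a ∈ C) (hb : p b ∈ C) : False := by
  apply buildBergeCycle hgirth (b - a + 1) (by omega) (by omega)
    (fun k => p (a + k)) (fun k => if k = b - a then C else F (a + k))
  · intro k1 h1 k2 h2 he
    have := hpinj (a + k1) (by omega) (a + k2) (by omega) he; omega
  · intro k1 h1 k2 h2 he
    split_ifs at he with e1 e2
    · omega
    · exact absurd he (hCne _ (by omega) (by omega))
    · exact absurd he.symm (hCne _ (by omega) (by omega))
    · have := hFinj (a + k1) (by omega) (a + k2) (by omega) he; omega
  · intro k hk; split_ifs with e
    · exact hC
    · exact hFH _ (by omega)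
  · intro k hk; split_ifs with e
    · rw [show a + k = b by omega]; exact hb
    · exact hv1 _ (by omega)
  · intro k hk
    rw [if_neg (by omega : ¬ k = b - a), show a + (k + 1) = (a + k) + 1 by omega]
    exact hv2 _ (by omega)
  · rw [show b - a + 1 - 1 = b - a by omega, if_pos rfl, Nat.add_zero]
    exact ha

/-- Shape 2: one non-path vertex `z`, path run `p a, …, p b`, hyperedges
`C₀, F a, …, F (b-1), C₁`. -/
lemma shape2 (a b : ℕ) (hab : a ≤ b) (hbn : b ≤ n) (htg : b - a + 2 ≤ g)
    (z : V) (hz : ∀ m ≤ n, z ≠ p m)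
    (C₀ C₁ : Finset V) (hC₀ : C₀ ∈ H) (hC₁ : C₁ ∈ H) (hCC : C₀ ≠ C₁)
    (hCne : ∀ k, a ≤ k → k < b → C₀ ≠ F k ∧ C₁ ≠ F k)
    (hzC₀ : z ∈ C₀) (haC₀ : p a ∈ C₀) (hbC₁ : p b ∈ C₁) (hzC₁ : z ∈ C₁) : False := by
  apply buildBergeCycle hgirth (b - a + 2) (by omega) htg
    (fun k => if k = 0 then z else p (a + k - 1))
    (fun k => if k = 0 then C₀ else if k = b - a + 1 then C₁ else F (a + k - 1))
  · intro k1 h1 k2 h2 he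
    split_ifs at he with e1 e2
    · omega
    · exact absurd he (hz _ (by omega))
    · exact absurd he.symm (hz _ (by omega))
    · have := hpinj (a + k1 - 1) (by omega) (a + k2 - 1) (by omega) he; omega
  · intro k1 h1 k2 h2 he
    split_ifs at he with e1 e2 e3 e4 e5 e6 e7 e8
    all_goals first
      | omega
      | exact absurd he hCC
      | exact absurd he hCC.symm
      | exact absurd he ((hCne (a + k2 - 1) (by omega) (by omega)).1)
      | exact absurd he.symm ((hCne (a + k1 - 1) (by omega) (by omega)).1)
      | exact absurd he.symm ((hCne (a + k1 - 1) (by omega) (by omega)).2)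
      | exact absurd he ((hCne (a + k2 - 1) (by omega) (by omega)).2)
      | (have := hFinj (a + k1 - 1) (by omega) (a + k2 - 1) (by omega) he; omega)
  · intro k hk; split_ifs with e1 e2
    · exact hC₀
    · exact hC₁
    · exact hFH _ (by omega)
  · intro k hk; split_ifs with e1 e2
    · exact hzC₀
    · rw [show a + k - 1 = b by omega]; exact hbC₁
    · exact hv1 _ (by omega)
  · intro k hk
    rw [if_neg (Nat.succ_ne_zero k)]
    split_ifs with e1 e2
    · rw [show a + (k + 1) - 1 = a by omega]; exact haC₀
    · omega
    · rw [show a + (k + 1) - 1 = (a + k - 1) + 1 by omega]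
      exact hv2 _ (by omega)
  · rw [if_pos rfl, show b - a + 2 - 1 = b - a + 1 by omega,
      if_neg (by omega : ¬ b - a + 1 = 0), if_pos rfl]
    exact hzC₁

/-- Shape 3: two non-path vertices `x, y`, path run `p a, …, p b`, hyperedges
`C₀, F a, …, F (b-1), C₁, C₂`. -/
lemma shape3 (a b : ℕ) (hab : a ≤ b) (hbn : b ≤ n) (htg : b - a + 3 ≤ g)
    (x y : V) (hxy : x ≠ y)
    (hx : ∀ m ≤ n, x ≠ p m) (hy : ∀ m ≤ n, y ≠ p m)
    (C₀ C₁ C₂ : Finset V) (hC₀ : C₀ ∈ H) (hC₁ : C₁ ∈ H) (hC₂ : C₂ ∈ H)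
    (h01 : C₀ ≠ C₁) (h02 : C₀ ≠ C₂) (h12 : C₁ ≠ C₂)
    (hCne : ∀ k, a ≤ k → k < b → C₀ ≠ F k ∧ C₁ ≠ F k ∧ C₂ ≠ F k)
    (hx0 : x ∈ C₀) (ha0 : p a ∈ C₀) (hb1 : p b ∈ C₁) (hy1 : y ∈ C₁)
    (hy2 : y ∈ C₂) (hx2 : x ∈ C₂) : False := by
  apply buildBergeCycle hgirth (b - a + 3) (by omega) htg
    (fun k => if k = 0 then x else if k = b - a + 2 then y else p (a + k - 1))
    (fun k => if k = 0 then C₀ else if k = b - a + 1 then C₁ else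
      if k = b - a + 2 then C₂ else F (a + k - 1))
  · intro k1 h1 k2 h2 he
    split_ifs at he with e1 e2 e3 e4 e5
    all_goals first
      | omega
      | exact absurd he hxy
      | exact absurd he hxy.symm
      | exact absurd he (hx _ (by omega))
      | exact absurd he.symm (hx _ (by omega))
      | exact absurd he (hy _ (by omega))
      | exact absurd he.symm (hy _ (by omega))
      | (have := hpinj (a + k1 - 1) (by omega) (a + k2 - 1) (by omega) he; omega)
  · intro k1 h1 k2 h2 he
    split_ifs at he with e1 e2 e3 e4 e5 e6 e7 e8 e9 e10 e11 e12 e13 e14 e15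
    all_goals first
      | omega
      | exact absurd he h01
      | exact absurd he h01.symm
      | exact absurd he h02
      | exact absurd he h02.symm
      | exact absurd he h12
      | exact absurd he h12.symm
      | exact absurd he ((hCne (a + k2 - 1) (by omega) (by omega)).1)
      | exact absurd he.symm ((hCne (a + k1 - 1) (by omega) (by omega)).1)
      | exact absurd he.symm ((hCne (a + k1 - 1) (by omega) (by omega)).2.1)
      | exact absurd he ((hCne (a + k2 - 1) (by omega) (by omega)).2.1)
      | exact absurd he.symm ((hCne (a + k1 - 1) (by omega) (by omega)).2.2)
      | exact absurd he ((hCne (a + k2 - 1) (by omega) (by omega)).2.2)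
      | (have := hFinj (a + k1 - 1) (by omega) (a + k2 - 1) (by omega) he; omega)
  · intro k hk; split_ifs with e1 e2 e3
    · exact hC₀
    · exact hC₁
    · exact hC₂
    · exact hFH _ (by omega)
  · intro k hk; split_ifs with e1 e2 e3 e4 e5
    all_goals first
      | omega
      | exact hx0
      | exact hy2
      | (rw [show a + k - 1 = b by omega]; exact hb1)
      | exact hv1 _ (by omega)
  · intro k hk
    rw [if_neg (Nat.succ_ne_zero k)]
    split_ifs with e1 e2 e3 e4 e5 e6
    all_goals first
      | omega
      | (rw [show a + (k + 1) - 1 = a by omega]; exact ha0)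
      | exact hy1
      | (rw [show a + (k + 1) - 1 = b by omega]; exact hb1)
      | (rw [show a + (k + 1) - 1 = (a + k - 1) + 1 by omega]; exact hv2 _ (by omega))
  · rw [if_pos rfl, show b - a + 3 - 1 = b - a + 2 by omega,
      if_neg (by omega : ¬ b - a + 2 = 0), if_neg (by omega : ¬ b - a + 2 = b - a + 1),
      if_pos rfl]
    exact hx2

/-- A vertex of the path can lie in `F i` only if it is `p i` or `p (i+1)`. -/
lemma nostray (m i : ℕ) (hm : m ≤ n) (hi : i < n) (hmi : p m ∈ F i) :
    m = i ∨ m = i + 1 := by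
  by_contra hcon
  push_neg at hcon
  rcases Nat.lt_or_ge m i with hlt | hge
  · refine shape1 hgirth hlen p F hpinj hFinj hFH hv1 hv2 m i hlt (by omega) (F i)
      (hFH i hi) ?_ hmi (hv1 i hi)
    intro k hk1 hk2 he
    have := hFinj i hi k (by omega) he; omega
  · have hlt2 : i + 1 < m := by omega
    refine shape1 hgirth hlen p F hpinj hFinj hFH hv1 hv2 (i + 1) m hlt2 hm (F i)
      (hFH i hi) ?_ (hv2 i hi) hmi
    intro k hk1 hk2 he
    have := hFinj i hi k (by omega) he; omega

end Shapes

lemma walk_getVert_injOn {V : Type} {G : SimpleGraph V} :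
    ∀ {u v : V} (P : G.Walk u v), P.IsPath →
      ∀ a ≤ P.length, ∀ b ≤ P.length, P.getVert a = P.getVert b → a = b := by
  intro u v P
  induction P with
  | nil => intro _ a ha b hb _; simp only [Walk.length_nil, Nat.le_zero] at ha hb; omega
  | @cons u v' w hadj q ih =>
    intro hp a ha b hb hab
    rw [Walk.cons_isPath_iff] at hp
    match a, b with
    | 0, 0 => rfl
    | 0, b + 1 =>
      exfalso
      apply hp.2
      rw [Walk.mem_support_iff_exists_getVert]
      refine ⟨b, ?_, by simpa using hb⟩
      simpa [Walk.getVert_cons_succ, Walk.getVert_zero] using hab.symm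
    | a + 1, 0 =>
      exfalso
      apply hp.2
      rw [Walk.mem_support_iff_exists_getVert]
      refine ⟨a, ?_, by simpa using ha⟩
      simpa [Walk.getVert_cons_succ, Walk.getVert_zero] using hab
    | a + 1, b + 1 =>
      have := ih hp.1 a (by simpa using ha) b (by simpa using hb)
        (by simpa [Walk.getVert_cons_succ] using hab)
      omega

lemma walk_edges_mem {V : Type} {G : SimpleGraph V} :
    ∀ {u v : V} (P : G.Walk u v) (i : ℕ), i < P.length →
      s(P.getVert i, P.getVert (i + 1)) ∈ P.edges := by
  intro u v P
  induction P with
  | nil => intro i hi; simp at hi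
  | @cons u v' w hadj q ih =>
    intro i hi
    match i with
    | 0 =>
      simp [Walk.edges_cons, Walk.getVert_cons_succ, Walk.getVert_zero]
    | i + 1 =>
      simp only [Walk.edges_cons, Walk.getVert_cons_succ, List.mem_cons]
      exact Or.inr (ih i (by simpa using hi))

lemma walk_mem_edges {V : Type} {G : SimpleGraph V} :
    ∀ {u v : V} (P : G.Walk u v), ∀ e ∈ P.edges,
      ∃ i, i < P.length ∧ e = s(P.getVert i, P.getVert (i + 1)) := by
  intro u v P
  induction P with
  | nil => intro e he; simp at he
  | @cons u v' w hadj q ih =>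
    intro e he
    rw [Walk.edges_cons, List.mem_cons] at he
    rcases he with rfl | he
    · exact ⟨0, by simp, by simp [Walk.getVert_cons_succ, Walk.getVert_zero]⟩
    · obtain ⟨i, hi, rfl⟩ := ih e he
      exact ⟨i + 1, by simp only [Walk.length_cons]; omega,
        by simp [Walk.getVert_cons_succ]⟩

/-- Lemma 5.2 of the paper: if the linear `s`-uniform hypergraph `H` has no Berge
cycle of length at most `g`, then every path on at most `g` vertices in `G` is good. -/
theorem short_paths_are_good {V : Type} [DecidableEq V] (s g : ℕ) (hg : 4 ≤ g)
    (H : Set (Finset V))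
    (huniform : ∀ e ∈ H, e.card = s)
    (hlinear : ∀ e ∈ H, ∀ f ∈ H, e ≠ f → (e ∩ f).card ≤ 1)
    (hgirth : BergeCycleFreeUpTo H g)
    (G : SimpleGraph V) (h : Sym2 V → Finset V)
    (hmem : ∀ e ∈ G.edgeSet, h e ∈ H ∧ ∀ x ∈ e, x ∈ h e)
    (hinj : Set.InjOn h G.edgeSet)
    {u v : V} (P : G.Walk u v) (hP : P.IsPath)
    (hlen : P.length + 1 ≤ g) :
    IsGoodPath H h P := by
  classical
  set n := P.length with hn
  set p : ℕ → V := P.getVert with hpdef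
  set F : ℕ → Finset V := fun i => h s(P.getVert i, P.getVert (i + 1)) with hFdef
  have hpinj : ∀ a ≤ n, ∀ b ≤ n, p a = p b → a = b := walk_getVert_injOn P hP
  have hEedge : ∀ i < n, s(P.getVert i, P.getVert (i + 1)) ∈ G.edgeSet :=
    fun i hi => (G.mem_edgeSet).2 (P.adj_getVert_succ hi)
  have hFH : ∀ i < n, F i ∈ H := fun i hi => (hmem _ (hEedge i hi)).1
  have hv1 : ∀ i < n, p i ∈ F i :=
    fun i hi => (hmem _ (hEedge i hi)).2 _ (Sym2.mem_mk_left _ _)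
  have hv2 : ∀ i < n, p (i + 1) ∈ F i :=
    fun i hi => (hmem _ (hEedge i hi)).2 _ (Sym2.mem_mk_right _ _)
  have hFinj : ∀ i < n, ∀ j < n, F i = F j → i = j := by
    intro i hi j hj he
    have hE := hinj (hEedge i hi) (hEedge j hj) he
    rcases Sym2.eq_iff.1 hE with ⟨h1, h2⟩ | ⟨h1, h2⟩
    · exact hpinj i (by omega) j (by omega) h1
    · have e1 := hpinj i (by omega) (j + 1) (by omega) h1
      have e2 := hpinj (i + 1) (by omega) j (by omega) h2
      omega
  constructor
  · -- part (i)
    intro e he e' he' hne x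
    obtain ⟨i, hi, rfl⟩ := walk_mem_edges P e he
    obtain ⟨j, hj, rfl⟩ := walk_mem_edges P e' he'
    have hij : i ≠ j := by
      rintro rfl; exact hne rfl
    constructor
    · rintro ⟨hx, hx'⟩
      have key : ∀ i' j', i' < j' → j' < n →
          x ∈ F i' → x ∈ F j' →
          x ∈ (s(P.getVert i', P.getVert (i' + 1)) : Sym2 V) ∧
          x ∈ (s(P.getVert j', P.getVert (j' + 1)) : Sym2 V) := by
        intro i' j' hij' hj' hxi hxj
        by_cases hadj : j' = i' + 1
        · subst hadj
          have hFne : F i' ≠ F (i' + 1) := by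
            intro hh; have := hFinj i' (by omega) (i' + 1) hj' hh; omega
          have hcard := hlinear _ (hFH i' (by omega)) _ (hFH (i' + 1) hj') hFne
          have hxeq : x = p (i' + 1) :=
            Finset.card_le_one.1 hcard x (Finset.mem_inter.2 ⟨hxi, hxj⟩)
              (p (i' + 1))
              (Finset.mem_inter.2 ⟨hv2 i' (by omega), hv1 (i' + 1) hj'⟩)
          rw [hxeq]
          exact ⟨Sym2.mem_mk_right _ _, Sym2.mem_mk_left _ _⟩
        · exfalso
          by_cases hxp : ∃ m ≤ n, x = p m
          · obtain ⟨m, hm, rfl⟩ := hxp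
            have h1 := nostray hgirth hlen p F hpinj hFinj hFH hv1 hv2 m i' hm (by omega) hxi
            have h2 := nostray hgirth hlen p F hpinj hFinj hFH hv1 hv2 m j' hm hj' hxj
            omega
          · push_neg at hxp
            have hFne : F i' ≠ F j' := by
              intro hh; have := hFinj i' (by omega) j' hj' hh; omega
            refine shape2 hgirth hlen p F hpinj hFinj hFH hv1 hv2
              (i' + 1) j' (by omega) (by omega) (by omega) x hxp
              (F i') (F j') (hFH i' (by omega)) (hFH j' hj') hFne ?_
              hxi (hv2 i' (by omega)) (hv1 j' hj') hxj
            intro k hk1 hk2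
            constructor
            · intro hh; have := hFinj i' (by omega) k (by omega) hh; omega
            · intro hh; have := hFinj j' hj' k (by omega) hh; omega
      rcases Nat.lt_or_ge i j with hlt | hge
      · exact key i j hlt hj hx hx'
      · have := key j i (by omega) hi hx' hx
        exact ⟨this.2, this.1⟩
    · rintro ⟨hx, hx'⟩
      exact ⟨(hmem _ (hEedge i hi)).2 x hx, (hmem _ (hEedge j hj)).2 x hx'⟩
  · -- part (ii)
    intro f hf hfne x y hxf hyf hex hey
    obtain ⟨e, he, hxe⟩ := hex
    obtain ⟨e', he', hye⟩ := hey
    obtain ⟨i, hi, rfl⟩ := walk_mem_edges P e he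
    obtain ⟨j, hj, rfl⟩ := walk_mem_edges P e' he'
    have hfnh : ∀ k < n, f ≠ F k := fun k hk => hfne _ (walk_edges_mem P k hk)
    by_contra hxy
    have hone : ∀ a ≤ n, ∀ z : V, (∀ m ≤ n, z ≠ p m) → ∀ k < n,
        p a ∈ f → z ∈ f → z ∈ F k → False := by
      intro a ha z hz k hk haf hzf hzk
      rcases le_or_gt a k with hak | hak
      · refine shape2 hgirth hlen p F hpinj hFinj hFH hv1 hv2
          a k hak (by omega) (by omega) z hz f (F k) hf (hFH k hk)
          (hfnh k hk) ?_ hzf haf (hv1 k hk) hzk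
        intro m hm1 hm2
        refine ⟨hfnh m (by omega), ?_⟩
        intro hh; have := hFinj k hk m (by omega) hh; omega
      · refine shape2 hgirth hlen p F hpinj hFinj hFH hv1 hv2
          (k + 1) a hak ha (by omega) z hz (F k) f (hFH k hk) hf
          (Ne.symm (hfnh k hk)) ?_ hzk (hv2 k hk) haf hzf
        intro m hm1 hm2
        refine ⟨?_, hfnh m (by omega)⟩
        intro hh; have := hFinj k hk m (by omega) hh; omega
    by_cases hxp : ∃ a ≤ n, x = p a
    · obtain ⟨a, ha, rfl⟩ := hxp
      by_cases hyp : ∃ b ≤ n, y = p b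
      · obtain ⟨b, hb, rfl⟩ := hyp
        have hab : a ≠ b := by rintro rfl; exact hxy rfl
        have hU1 : ∀ a' b', a' < b' → b' ≤ n → p a' ∈ f → p b' ∈ f → False := by
          intro a' b' hab' hbn' ha' hb'
          exact shape1 hgirth hlen p F hpinj hFinj hFH hv1 hv2 a' b' hab' hbn'
            f hf (fun k hk1 hk2 => hfnh k (by omega)) ha' hb'
        rcases Nat.lt_or_ge a b with hlt | hge
        · exact hU1 a b hlt hb hxf hyf
        · exact hU1 b a (by omega) ha hyf hxf
      · push_neg at hyp
        exact hone a ha y hyp j hj hxf hyf hye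
    · push_neg at hxp
      by_cases hyp : ∃ b ≤ n, y = p b
      · obtain ⟨b, hb, rfl⟩ := hyp
        exact hone b hb x hxp i hi hyf hxf hxe
      · push_neg at hyp
        by_cases hij : i = j
        · subst hij
          have hcard := hlinear f hf (F i) (hFH i hi) (hfnh i hi)
          exact hxy (Finset.card_le_one.1 hcard x
            (Finset.mem_inter.2 ⟨hxf, hxe⟩) y (Finset.mem_inter.2 ⟨hyf, hye⟩))
        · have key2 : ∀ (x' y' : V) (i' j' : ℕ), x' ≠ y' → i' < j' → j' < n →
              (∀ m ≤ n, x' ≠ p m) → (∀ m ≤ n, y' ≠ p m) →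
              x' ∈ f → y' ∈ f → x' ∈ F i' → y' ∈ F j' → False := by
            intro x' y' i' j' hxy' hij' hj' hx' hy' hx'f hy'f hx'i hy'j
            have hFne : F i' ≠ F j' := by
              intro hh; have := hFinj i' (by omega) j' hj' hh; omega
            refine shape3 hgirth hlen p F hpinj hFinj hFH hv1 hv2
              (i' + 1) j' (by omega) (by omega) (by omega)
              x' y' hxy' hx' hy'
              (F i') (F j') f (hFH i' (by omega)) (hFH j' hj') hf
              hFne (Ne.symm (hfnh i' (by omega))) (Ne.symm (hfnh j' hj')) ?_
              hx'i (hv2 i' (by omega)) (hv1 j' hj') hy'j hy'f hx'f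
            intro k hk1 hk2
            refine ⟨?_, ?_, hfnh k (by omega)⟩
            · intro hh; have := hFinj i' (by omega) k (by omega) hh; omega
            · intro hh; have := hFinj j' hj' k (by omega) hh; omega
          rcases Nat.lt_or_ge i j with hlt | hge
          · exact key2 x y i j hxy hlt hj hxp hyp hxf hyf hxe hye
          · exact key2 y x j i (Ne.symm hxy) (by omega) hi hyp hxp hyf hxf hye hxe
end

section
/- Let g ≥ 4 and suppose the linear s-uniform hypergraph H has no Berge cycle of length at most g. Let P be a good path in G with endpoint v, and let u be a vertex not on P such that uv is an edge of G. If the path P + uv obtained by appending the edge uv to P is bad, then there exist a hyperedge f of H with f ≠ h(uv) and an edge e of P which is neither the edge of P incident to v nor the edge of P adjacent to that edge (i.e., e is at distance at least 2 from v along P), such that f intersects h(uv) and f intersects h(e). -/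
open SimpleGraph

/-!
If `P + uv` is bad while `P` is good, then either `h(uv)` meets some `h(e)`, `e ∈ P`, outside
`e ∩ uv`, or some hyperedge `f` not used by the path meets `h(uv)` and some `h(e)` in two
distinct vertices. When `e` is the last edge `pv` of `P` or the edge before it, the hyperedges
`h(e)`, `h(pv)`, `h(uv)` (and `f`) would close a Berge cycle of length at most four; linearity
rules out the degenerate configurations in which two of its vertices coincide.
-/

def IsLinearHypergraph {V : Type*} [DecidableEq V] (H : Set (Finset V)) : Prop :=
  ∀ e ∈ H, ∀ f ∈ H, e ≠ f → (e ∩ f).card ≤ 1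

theorem IsLinearHypergraph.eq_of_mem_of_mem {V : Type*} [DecidableEq V] {H : Set (Finset V)}
    (hH : IsLinearHypergraph H) {a b : Finset V} (ha : a ∈ H) (hb : b ∈ H) (hab : a ≠ b)
    {x y : V} (hxa : x ∈ a) (hxb : x ∈ b) (hya : y ∈ a) (hyb : y ∈ b) : x = y :=
  Finset.card_le_one.mp (hH a ha b hb hab) x (Finset.mem_inter.2 ⟨hxa, hxb⟩) y
    (Finset.mem_inter.2 ⟨hya, hyb⟩)

namespace BergeCycleFreeUpTo

variable {V : Type*} {H : Set (Finset V)} {g : ℕ}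

-- `ZMod (n + 2)` is definitionally `Fin (n + 2)`, so cycles can be written with `![...]`.
theorem false_of_cycle (hH : BergeCycleFreeUpTo H g) {n : ℕ} (hn : n + 2 ≤ g)
    {v : Fin (n + 2) → V} {e : Fin (n + 2) → Finset V} (hv : v.Injective) (he : e.Injective)
    (heH : ∀ i, e i ∈ H) (hve : ∀ i, v i ∈ e (i - 1) ∧ v i ∈ e i) : False :=
  hH ⟨n + 2, by omega, hn, v, e, hv, he, heH, hve⟩

theorem eq_of_triangle [DecidableEq V] (hH : BergeCycleFreeUpTo H g) (hg : 3 ≤ g)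
    (hlin : IsLinearHypergraph H) {a b c : Finset V} (ha : a ∈ H) (hb : b ∈ H) (hc : c ∈ H)
    (hab : a ≠ b) (hac : a ≠ c) (hbc : b ≠ c) {x y z : V} (hxa : x ∈ a) (hxb : x ∈ b)
    (hyb : y ∈ b) (hyc : y ∈ c) (hzc : z ∈ c) (hza : z ∈ a) : x = y := by
  by_contra hxy
  have hxz : x ≠ z := by
    rintro rfl; exact hxy (hlin.eq_of_mem_of_mem hb hc hbc hxb hzc hyb hyc)
  have hyz : y ≠ z := by
    rintro rfl; exact hxy (hlin.eq_of_mem_of_mem ha hb hab hxa hxb hza hyb)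
  refine hH.false_of_cycle (n := 1) hg (v := ![z, x, y]) (e := ![a, b, c]) ?_ ?_ ?_ ?_
  · intro i j; fin_cases i <;> fin_cases j <;> simp_all [eq_comm]
  · intro i j; fin_cases i <;> fin_cases j <;> simp_all [eq_comm]
  · intro i; fin_cases i <;> simp_all
  · intro i; fin_cases i <;> simp_all

theorem eq_of_quadrilateral [DecidableEq V] (hH : BergeCycleFreeUpTo H g) (hg : 4 ≤ g)
    (hlin : IsLinearHypergraph H) {a b c d : Finset V} (ha : a ∈ H) (hb : b ∈ H) (hc : c ∈ H)
    (hd : d ∈ H) (hab : a ≠ b) (hac : a ≠ c) (had : a ≠ d) (hbc : b ≠ c) (hbd : b ≠ d)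
    (hcd : c ≠ d) {x y z w : V} (hxa : x ∈ a) (hxb : x ∈ b) (hyb : y ∈ b) (hyc : y ∈ c)
    (hzc : z ∈ c) (hzd : z ∈ d) (hwd : w ∈ d) (hwa : w ∈ a) : x = y := by
  by_contra hxy
  have hxz : x ≠ z := by
    rintro rfl; exact hxy (hlin.eq_of_mem_of_mem hb hc hbc hxb hzc hyb hyc)
  have hyw : y ≠ w := by
    rintro rfl; exact hxy (hlin.eq_of_mem_of_mem ha hb hab hxa hxb hwa hyb)
  have hxw : x ≠ w := by
    rintro rfl
    exact hxy (hH.eq_of_triangle (by omega) hlin hd hb hc hbd.symm hcd.symm hbc hwd hxb hyb hyc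
      hzc hzd)
  have hyz : y ≠ z := by
    rintro rfl
    exact hxy (hH.eq_of_triangle (by omega) hlin ha hb hd hab had hbd hxa hxb hyb hzd hwd hwa)
  have hzw : z ≠ w := by
    rintro rfl
    exact hxy (hH.eq_of_triangle (by omega) hlin ha hb hc hab hac hbc hxa hxb hyb hyc hzc hwa)
  refine hH.false_of_cycle (n := 2) hg (v := ![w, x, y, z]) (e := ![a, b, c, d]) ?_ ?_ ?_ ?_
  · intro i j; fin_cases i <;> fin_cases j <;> simp_all [eq_comm]
  · intro i j; fin_cases i <;> fin_cases j <;> simp_all [eq_comm]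
  · intro i; fin_cases i <;> simp_all
  · intro i; fin_cases i <;> simp_all

end BergeCycleFreeUpTo

namespace SimpleGraph.Walk

variable {V : Type*} {G : SimpleGraph V} {w v : V} {e : Sym2 V}

theorem not_nil_of_mem_edges {P : G.Walk w v} (he : e ∈ P.edges) : ¬P.Nil :=
  edges_eq_nil.not.mp (List.ne_nil_of_mem he)

theorem mem_edges_dropLast_or_eq_of_mem_edges (P : G.Walk w v) (he : e ∈ P.edges) :
    e ∈ P.dropLast.edges ∨ e = s(P.penultimate, v) := by
  rw [← concat_dropLast (P.adj_penultimate (not_nil_of_mem_edges he)), edges_concat] at he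
  simpa [List.concat_eq_append] using he

theorem mem_dropLast_dropLast_or_of_mem_edges (P : G.Walk w v) (he : e ∈ P.edges) :
    e ∈ P.edges.dropLast.dropLast ∨ v ∈ e ∨ ∃ p ∈ e, v ∉ e ∧ s(p, v) ∈ P.edges := by
  rcases P.mem_edges_dropLast_or_eq_of_mem_edges he with he' | rfl
  · rcases P.dropLast.mem_edges_dropLast_or_eq_of_mem_edges he' with he'' | rfl
    · exact .inl (by simpa only [edges_dropLast] using he'')
    · by_cases hv : v ∈ s(P.dropLast.penultimate, P.penultimate)
      · exact .inr (.inl hv)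
      · exact .inr (.inr ⟨P.penultimate, Sym2.mem_mk_right _ _, hv,
          mk_penultimate_end_mem_edges (not_nil_of_mem_edges he)⟩)
  · exact .inr (.inl (Sym2.mem_mk_right _ _))

end SimpleGraph.Walk

section GoodPath

variable {V : Type*} [DecidableEq V] {H : Set (Finset V)} {G : SimpleGraph V}
  {h : Sym2 V → Finset V} {w v u : V}

theorem IsGoodPath.exists_of_not_isGoodPath_concat {P : G.Walk w v}
    (hgood : IsGoodPath H h P) (hlin : IsLinearHypergraph H)
    (hmem : ∀ e ∈ G.edgeSet, h e ∈ H ∧ ∀ x ∈ e, x ∈ h e)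
    (hadj : G.Adj v u) (hbad : ¬IsGoodPath H h (P.concat hadj)) :
    (∃ e ∈ P.edges, ∃ x ∈ h e, x ∈ h s(v, u) ∧ ¬(x ∈ e ∧ x ∈ s(v, u))) ∨
    ∃ f ∈ H, f ≠ h s(v, u) ∧ (∀ e ∈ P.edges, f ≠ h e) ∧
      ∃ e ∈ P.edges, ∃ x ∈ f, x ∈ h e ∧ ∃ y ∈ f, y ∈ h s(v, u) ∧ x ≠ y := by
  have hE : ∀ e, e ∈ (P.concat hadj).edges ↔ e ∈ P.edges ∨ e = s(v, u) := by
    simp [Walk.edges_concat]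
  simp only [IsGoodPath, not_and_or, not_forall, exists_prop] at hbad
  rcases hbad with ⟨e, he, e', he', hee', x, hx⟩ |
    ⟨f, hf, hfP, x, y, hxf, hyf, ⟨e, he, hxe⟩, ⟨e', he', hye'⟩, hxy⟩
  · have hx' : (x ∈ h e ∧ x ∈ h e') ∧ ¬(x ∈ e ∧ x ∈ e') := by
      have := (hmem e ((P.concat hadj).edges_subset_edgeSet he)).2 x
      have := (hmem e' ((P.concat hadj).edges_subset_edgeSet he')).2 x
      tauto
    rw [hE] at he he'
    rcases he with he | rfl <;> rcases he' with he' | rfl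
    · exact absurd ((hgood.1 e he e' he' hee' x).1 hx'.1) hx'.2
    · exact .inl ⟨e, he, x, hx'.1.1, hx'.1.2, hx'.2⟩
    · exact .inl ⟨e', he', x, hx'.1.2, hx'.1.1, fun hx'' => hx'.2 ⟨hx''.2, hx''.1⟩⟩
    · exact absurd rfl hee'
  · have hfP' : ∀ e ∈ P.edges, f ≠ h e := fun e he => hfP e ((hE e).2 (.inl he))
    have hfE : f ≠ h s(v, u) := hfP _ ((hE _).2 (.inr rfl))
    rw [hE] at he he'
    rcases he with he | rfl <;> rcases he' with he' | rfl
    · exact absurd (hgood.2 f hf hfP' x y hxf hyf ⟨e, he, hxe⟩ ⟨e', he', hye'⟩) hxy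
    · exact .inr ⟨f, hf, hfE, hfP', e, he, x, hxf, hxe, y, hyf, hye', hxy⟩
    · exact .inr ⟨f, hf, hfE, hfP', e', he', y, hyf, hye', x, hxf, hxe, Ne.symm hxy⟩
    · exact absurd (hlin.eq_of_mem_of_mem hf (hmem _ hadj).1 hfE hxf hxe hyf hye') hxy

theorem mem_of_mem_inter_of_not_mem_dropLast_dropLast {g : ℕ}
    (hgirth : BergeCycleFreeUpTo H g) (hg : 3 ≤ g) (hlin : IsLinearHypergraph H)
    (hmem : ∀ e ∈ G.edgeSet, h e ∈ H ∧ ∀ x ∈ e, x ∈ h e) (hinj : Set.InjOn h G.edgeSet)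
    {P : G.Walk w v} (hadj : G.Adj v u) (hne : ∀ e ∈ P.edges, h e ≠ h s(v, u))
    {e : Sym2 V} (he : e ∈ P.edges) (hfar : e ∉ P.edges.dropLast.dropLast)
    {x : V} (hxe : x ∈ h e) (hxE : x ∈ h s(v, u)) : x ∈ e ∧ x ∈ s(v, u) := by
  have hmemP : ∀ e ∈ P.edges, h e ∈ H ∧ ∀ x ∈ e, x ∈ h e :=
    fun e he => hmem e (P.edges_subset_edgeSet he)
  have hvE : v ∈ h s(v, u) := (hmem _ hadj).2 v (Sym2.mem_mk_left v u)
  rcases P.mem_dropLast_dropLast_or_of_mem_edges he with hin | hve | ⟨p, hpe, hve, hpv⟩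
  · exact absurd hin hfar
  · obtain rfl : x = v := hlin.eq_of_mem_of_mem (hmemP e he).1 (hmem _ hadj).1 (hne e he)
      hxe hxE ((hmemP e he).2 v hve) hvE
    exact ⟨hve, Sym2.mem_mk_left _ _⟩
  · have hpv' : G.Adj p v := P.edges_subset_edgeSet hpv
    have hne' : h e ≠ h s(p, v) := fun heq =>
      hve (hinj (P.edges_subset_edgeSet he) hpv' heq ▸ Sym2.mem_mk_right p v)
    exact absurd (hgirth.eq_of_triangle hg hlin (hmemP e he).1 (hmemP _ hpv).1 (hmem _ hadj).1
      hne' (hne e he) (hne _ hpv) ((hmemP e he).2 p hpe)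
      ((hmemP _ hpv).2 p (Sym2.mem_mk_left _ _)) ((hmemP _ hpv).2 v (Sym2.mem_mk_right _ _))
      hvE hxE hxe) hpv'.ne

theorem eq_of_mem_inter_of_not_mem_dropLast_dropLast {g : ℕ}
    (hgirth : BergeCycleFreeUpTo H g) (hg : 4 ≤ g) (hlin : IsLinearHypergraph H)
    (hmem : ∀ e ∈ G.edgeSet, h e ∈ H ∧ ∀ x ∈ e, x ∈ h e) (hinj : Set.InjOn h G.edgeSet)
    {P : G.Walk w v} (hadj : G.Adj v u) (hne : ∀ e ∈ P.edges, h e ≠ h s(v, u))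
    {e : Sym2 V} (he : e ∈ P.edges) (hfar : e ∉ P.edges.dropLast.dropLast)
    {f : Finset V} (hf : f ∈ H) (hfE : f ≠ h s(v, u)) (hfP : ∀ e ∈ P.edges, f ≠ h e)
    {x y : V} (hxf : x ∈ f) (hxe : x ∈ h e) (hyf : y ∈ f) (hyE : y ∈ h s(v, u)) : x = y := by
  have hmemP : ∀ e ∈ P.edges, h e ∈ H ∧ ∀ x ∈ e, x ∈ h e :=
    fun e he => hmem e (P.edges_subset_edgeSet he)
  have hvE : v ∈ h s(v, u) := (hmem _ hadj).2 v (Sym2.mem_mk_left v u)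
  rcases P.mem_dropLast_dropLast_or_of_mem_edges he with hin | hve | ⟨p, hpe, hve, hpv⟩
  · exact absurd hin hfar
  · exact (hgirth.eq_of_triangle (by omega) hlin (hmem _ hadj).1 hf (hmemP e he).1 hfE.symm
      (hne e he).symm (hfP e he) hyE hyf hxf hxe ((hmemP e he).2 v hve) hvE).symm
  · have hpv' : G.Adj p v := P.edges_subset_edgeSet hpv
    have hne' : h e ≠ h s(p, v) := fun heq =>
      hve (hinj (P.edges_subset_edgeSet he) hpv' heq ▸ Sym2.mem_mk_right p v)
    exact absurd (hgirth.eq_of_quadrilateral hg hlin (hmemP e he).1 (hmemP _ hpv).1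
      (hmem _ hadj).1 hf hne' (hne e he) (hfP e he).symm (hne _ hpv) (hfP _ hpv).symm hfE.symm
      ((hmemP e he).2 p hpe) ((hmemP _ hpv).2 p (Sym2.mem_mk_left _ _))
      ((hmemP _ hpv).2 v (Sym2.mem_mk_right _ _)) hvE hyE hyf hxf hxe) hpv'.ne

end GoodPath

theorem bad_extension_ruined_general {V : Type} [DecidableEq V] (s g : ℕ) (hg : 4 ≤ g)
    (H : Set (Finset V))
    (hlinear : ∀ e ∈ H, ∀ f ∈ H, e ≠ f → (e ∩ f).card ≤ 1)
    (hgirth : BergeCycleFreeUpTo H g)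
    (G : SimpleGraph V) (h : Sym2 V → Finset V)
    (hmem : ∀ e ∈ G.edgeSet, h e ∈ H ∧ ∀ x ∈ e, x ∈ h e)
    (hinj : Set.InjOn h G.edgeSet)
    {w v u : V} (P : G.Walk w v)
    (hu : u ∉ P.support) (hadj : G.Adj v u)
    (hgood : IsGoodPath H h P)
    (hbad : ¬ IsGoodPath H h (P.concat hadj)) :
    ∃ f ∈ H, f ≠ h s(u, v) ∧ (f ∩ h s(u, v)).Nonempty ∧
      ∃ e ∈ P.edges.dropLast.dropLast, (f ∩ h e).Nonempty := by
  rw [Sym2.eq_swap]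
  have hne : ∀ e ∈ P.edges, h e ≠ h s(v, u) := fun e he heq =>
    hu (P.snd_mem_support_of_mem_edges (hinj (P.edges_subset_edgeSet he) hadj heq ▸ he))
  rcases hgood.exists_of_not_isGoodPath_concat hlinear hmem hadj hbad with
    ⟨e, he, x, hxe, hxE, hx⟩ | ⟨f, hf, hfE, hfP, e, he, x, hxf, hxe, y, hyf, hyE, hxy⟩
  · refine ⟨h e, (hmem e (P.edges_subset_edgeSet he)).1, hne e he,
      ⟨x, Finset.mem_inter.2 ⟨hxe, hxE⟩⟩, e, ?_, ⟨x, Finset.mem_inter.2 ⟨hxe, hxe⟩⟩⟩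
    by_contra hfar
    exact hx (mem_of_mem_inter_of_not_mem_dropLast_dropLast hgirth (by omega) hlinear hmem hinj
      hadj hne he hfar hxe hxE)
  · refine ⟨f, hf, hfE, ⟨y, Finset.mem_inter.2 ⟨hyf, hyE⟩⟩, e, ?_,
      ⟨x, Finset.mem_inter.2 ⟨hxf, hxe⟩⟩⟩
    by_contra hfar
    exact hxy (eq_of_mem_inter_of_not_mem_dropLast_dropLast hgirth hg hlinear hmem hinj hadj
      hne he hfar hf hfE hfP hxf hxe hyf hyE)

/-- Observation 5.3 of the paper: if `P` is a good path ending at `v`, `u` is a vertex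
outside `P` adjacent to `v`, and the path `P + uv` is bad, then some hyperedge
`f ≠ h(uv)` intersects `h(uv)` as well as `h(e)` for an edge `e` of `P` at distance
at least `2` from `v` along `P` (that is, an edge among all but the last two edges
of `P`). -/
theorem bad_extension_ruined {V : Type} [DecidableEq V] (s g : ℕ) (hg : 4 ≤ g)
    (H : Set (Finset V))
    (huniform : ∀ e ∈ H, e.card = s)
    (hlinear : ∀ e ∈ H, ∀ f ∈ H, e ≠ f → (e ∩ f).card ≤ 1)
    (hgirth : BergeCycleFreeUpTo H g)
    (G : SimpleGraph V) (h : Sym2 V → Finset V)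
    (hmem : ∀ e ∈ G.edgeSet, h e ∈ H ∧ ∀ x ∈ e, x ∈ h e)
    (hinj : Set.InjOn h G.edgeSet)
    {w v u : V} (P : G.Walk w v) (hP : P.IsPath)
    (hu : u ∉ P.support) (hadj : G.Adj v u)
    (hgood : IsGoodPath H h P)
    (hbad : ¬ IsGoodPath H h (P.concat hadj)) :
    ∃ f ∈ H, f ≠ h s(u, v) ∧ (f ∩ h s(u, v)).Nonempty ∧
      ∃ e ∈ P.edges.dropLast.dropLast, (f ∩ h e).Nonempty :=
  bad_extension_ruined_general s g hg H hlinear hgirth G h hmem hinj P hu hadj hgood hbad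
end

section
/- Let H be a linear s-uniform hypergraph on a vertex set V, let G be a graph on V with an injective map h from the edge set of G to the hyperedges of H such that both endpoints of each edge e of G lie in h(e), and let Γ be a graph on V such that both endpoints of every edge of Γ lie in some common hyperedge of H. Let the edges of Γ be colored with k colors. Suppose Q = v_0 v_1 … v_{ℓ−1} is a good cycle of length ℓ in G such that for every edge v_i v_{i+1} of Q there is a cycle D_i of length 6 in Γ which is an induced subgraph of Γ, all of whose vertices lie in h(v_i v_{i+1}), on which v_i and v_{i+1} are at distance 2, and such that all edges of all the cycles D_i receive the same color. Then for every even integer t with 2ℓ ≤ t ≤ 4ℓ, Γ contains a monochromatic cycle of length t which is an induced subgraph of Γ. -/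
/-!
Replace each edge `xy` of the good cycle `Q` by one of the two arcs from `x` to `y` of its
hexagon, of length 2 or 4; taking `m` long arcs gives a closed walk of length `2ℓ + 2m`.
Goodness of `Q` makes the hyperedges of distinct edges of `Q` meet only in common endpoints, so
distinct arcs share only vertices of `Q` and the walk is a cycle. A `Γ`-edge between the arcs of
distinct edges `e, e'` lies in a hyperedge, which by goodness is `h g` for an edge `g` of a good
path through `e` and `e'`; since the endpoints of an edge of `Q` are not adjacent in `Γ`, `g` is
`e` or `e'`, so one end of the `Γ`-edge is a common vertex of `e` and `e'`. Hence a chord of the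
walk would be a chord of a single arc, and arcs are chordless because the hexagons are.
-/

open SimpleGraph

/-- A cycle `Q` in `G` is good if every pair of its edges is contained in a good
subpath of `Q` (a subpath being an initial segment of a rotation of `Q`). -/
def IsGoodCycle {V : Type*} [DecidableEq V] (H : Set (Finset V))
    {G : SimpleGraph V} (h : Sym2 V → Finset V) {v : V} (Q : G.Walk v v) : Prop :=
  Q.IsCycle ∧
  ∀ e ∈ Q.edges, ∀ e' ∈ Q.edges,
    ∃ (a : V) (ha : a ∈ Q.support) (b : V) (hb : b ∈ (Q.rotate a ha).support),
      ((Q.rotate a ha).takeUntil b hb).IsPath ∧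
      IsGoodPath H h ((Q.rotate a ha).takeUntil b hb) ∧
      e ∈ ((Q.rotate a ha).takeUntil b hb).edges ∧
      e' ∈ ((Q.rotate a ha).takeUntil b hb).edges

lemma List.sum_map_ite_mem_take {α M : Type*} [DecidableEq α] [AddCommMonoid M] {l : List α}
    (hl : l.Nodup) (m : ℕ) (a b : M) :
    (l.map fun x => if x ∈ l.take m then a else b).sum =
      min m l.length • a + (l.length - m) • b := by
  have hsplit := congrArg (List.map fun x => if x ∈ l.take m then a else b)
    (l.take_append_drop m)
  rw [List.map_append] at hsplit
  rw [← hsplit, List.sum_append,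
    List.map_congr_left (l := l.take m) (g := fun _ => a) fun x hx => if_pos hx,
    List.map_congr_left (l := l.drop m) (g := fun _ => b)
      fun x hx => if_neg fun hx' => List.disjoint_take_drop hl le_rfl hx' hx]
  simp

namespace SimpleGraph.Walk

variable {V : Type*} {G : SimpleGraph V} {u v : V}

lemma mem_support_of_mem_sym2 {p : G.Walk u v} {z : V} (hz : z ∈ s(u, v)) : z ∈ p.support := by
  rcases Sym2.mem_iff.mp hz with rfl | rfl
  exacts [p.start_mem_support, p.end_mem_support]

lemma IsCycle.eq_or_eq_of_mem_support_append {p : G.Walk u v} {q : G.Walk v u}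
    (hc : (p.append q).IsCycle) {a : V} (hp : a ∈ p.support) (hq : a ∈ q.support) :
    a = u ∨ a = v := by
  have hdisj := (List.nodup_append'.mp (tail_support_append p q ▸ hc.support_nodup)).2.2
  rw [← cons_tail_support, List.mem_cons] at hp hq
  rcases hp with rfl | hp
  · exact .inl rfl
  rcases hq with rfl | hq
  · exact .inr rfl
  exact (hdisj hp hq).elim

lemma IsCycle.isChordless_of_append_left {p : G.Walk u v} {q : G.Walk v u}
    (hc : (p.append q).IsCycle) (hch : (p.append q).IsChordless) (hq : 2 ≤ q.length) :
    p.IsChordless := by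
  rw [isChordless_iff_forall_mem_edges]
  intro a b ha hb hab
  have hab' := hch.mem_edges ((mem_support_append_iff _ _).mpr (.inl ha))
    ((mem_support_append_iff _ _).mpr (.inl hb)) hab
  rw [edges_append, List.mem_append] at hab'
  -- an edge of `q` between vertices of `p` joins `u` and `v`: impossible as `2 ≤ q.length`
  refine hab'.resolve_right fun hq' => ?_
  have hqp : q.IsPath := hc.isPath_of_append_right fun hp => by
    rw [nil_iff_support_eq.mp hp, List.mem_singleton] at ha hb
    exact hab.ne (ha.trans hb.symm)
  have hvu : s(v, u) ∈ q.edges := by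
    rcases hc.eq_or_eq_of_mem_support_append ha (q.fst_mem_support_of_mem_edges hq') with
      rfl | rfl <;>
    rcases hc.eq_or_eq_of_mem_support_append hb (q.snd_mem_support_of_mem_edges hq') with
      rfl | rfl
    all_goals first | exact absurd rfl hab.ne | simpa [Sym2.eq_swap] using hq'
  have := hqp.length_eq_one_of_mem_edges hvu
  omega

lemma IsChordless.reverse {p : G.Walk u v} (hp : p.IsChordless) : p.reverse.IsChordless := by
  rw [isChordless_iff_forall_mem_edges] at hp ⊢
  simp only [support_reverse, edges_reverse, List.mem_reverse]
  exact hp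

lemma IsCycle.isChordless_take {p : G.Walk u u} (hc : p.IsCycle) (hch : p.IsChordless)
    {n : ℕ} (hn : n + 2 ≤ p.length) : (p.take n).IsChordless := by
  rw [← append_take_drop_eq p n] at hc hch
  exact hc.isChordless_of_append_left hch (by rw [drop_length]; omega)

lemma IsCycle.isChordless_reverse_drop {p : G.Walk u u} (hc : p.IsCycle) (hch : p.IsChordless)
    {n : ℕ} (hn : 2 ≤ n) : (p.drop n).reverse.IsChordless := by
  have hl := hc.three_le_length
  have hc' := hc.reverse
  have hch' := hch.reverse
  rw [← append_take_drop_eq p n, reverse_append] at hc' hch'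
  exact hc'.isChordless_of_append_left hch' (by rw [length_reverse, take_length]; omega)

lemma IsCycle.not_adj_getVert {p : G.Walk u u} (hc : p.IsCycle) (hch : p.IsChordless)
    {n : ℕ} (hn : 2 ≤ n) (hnl : n + 2 ≤ p.length) : ¬ G.Adj u (p.getVert n) := by
  intro hadj
  have he := hch.mem_edges p.start_mem_support (p.getVert_mem_support n) hadj
  rw [← congrArg edges (p.append_take_drop_eq n), edges_append, List.mem_append] at he
  rcases he with he | he
  · have := (hc.isPath_take (n := n) (by omega)).length_eq_one_of_mem_edges he
    rw [take_length] at this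
    omega
  · have := (hc.isPath_drop (n := n) (by omega)).length_eq_one_of_mem_edges (Sym2.eq_swap ▸ he)
    rw [drop_length] at this
    omega

lemma IsCycle.exists_isChordless_path {p : G.Walk u u} (hc : p.IsCycle) (hch : p.IsChordless)
    {n k : ℕ} (hn : 2 ≤ n) (hnl : n + 2 ≤ p.length) (hk : k = n ∨ k = p.length - n) :
    ∃ A : G.Walk u (p.getVert n), A.IsPath ∧ A.IsChordless ∧ A.support ⊆ p.support ∧
      A.edges ⊆ p.edges ∧ A.length = k := by
  rcases hk with rfl | rfl
  · refine ⟨p.take k, hc.isPath_take (by omega), hc.isChordless_take hch hnl, ?_, ?_, ?_⟩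
    · rw [support_take]; exact List.take_subset _ _
    · rw [edges_take]; exact List.take_subset _ _
    · rw [take_length]; omega
  · refine ⟨(p.drop n).reverse, (hc.isPath_drop (by omega)).reverse,
      hc.isChordless_reverse_drop hch hn, ?_, ?_, ?_⟩
    · simp only [support_reverse, drop_support_eq_support_drop_min, List.reverse_subset]
      exact List.drop_subset _ _
    · simp only [edges_reverse, edges_drop, List.reverse_subset]
      exact List.drop_subset _ _
    · rw [length_reverse, drop_length]

variable {Γ : SimpleGraph V}

def expand (f : (d : G.Dart) → Γ.Walk d.fst d.snd) : {u v : V} → G.Walk u v → Γ.Walk u v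
  | _, _, nil => nil
  | _, _, cons h q => (f ⟨(_, _), h⟩).append (q.expand f)

variable (f : (d : G.Dart) → Γ.Walk d.fst d.snd)

@[simp]
lemma expand_nil : (nil : G.Walk u u).expand f = nil := rfl

@[simp]
lemma expand_cons {w : V} (h : G.Adj u v) (q : G.Walk v w) :
    (cons h q).expand f = (f ⟨(u, v), h⟩).append (q.expand f) := rfl

lemma length_expand (q : G.Walk u v) :
    (q.expand f).length = (q.darts.map fun d => (f d).length).sum := by
  induction q with
  | nil => rfl
  | cons h q ih => simp [ih]

lemma edges_expand (q : G.Walk u v) :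
    (q.expand f).edges = q.darts.flatMap fun d => (f d).edges := by
  induction q with
  | nil => rfl
  | cons h q ih => simp [ih]

lemma support_tail_expand (q : G.Walk u v) :
    (q.expand f).support.tail = q.darts.flatMap fun d => (f d).support.tail := by
  induction q with
  | nil => rfl
  | cons h q ih => simp [tail_support_append, ih]

lemma exists_mem_support_of_mem_support_expand {q : G.Walk u v} (hq : ¬ q.Nil) {z : V}
    (hz : z ∈ (q.expand f).support) : ∃ d ∈ q.darts, z ∈ (f d).support := by
  cases q with
  | nil => exact absurd .nil hq
  | cons h q =>
    rw [expand_cons, mem_support_append_iff, ← cons_tail_support (q.expand f), List.mem_cons,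
      support_tail_expand, List.mem_flatMap] at hz
    rcases hz with hz | rfl | ⟨d, hd, hz⟩
    · exact ⟨_, List.mem_cons_self, hz⟩
    · exact ⟨_, List.mem_cons_self, end_mem_support _⟩
    · exact ⟨d, List.mem_cons_of_mem _ hd, List.mem_of_mem_tail hz⟩

variable {f} {B : Sym2 V → Set V}

lemma nodup_support_tail_expand {q : G.Walk u v} (ht : q.IsTrail) (hs : q.support.tail.Nodup)
    (hB : ∀ e ∈ q.edges, ∀ e' ∈ q.edges, e ≠ e' → ∀ z ∈ B e, z ∈ B e' → z ∈ e)
    (hf : ∀ d ∈ q.darts, (f d).IsPath ∧ ∀ z ∈ (f d).support, z ∈ B d.edge) :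
    (q.expand f).support.tail.Nodup := by
  have hsnd : ∀ d ∈ q.darts, ∀ d' ∈ q.darts, d ≠ d' →
      ∀ z ∈ (f d).support.tail, z ∈ (f d').support.tail → z = d.snd := by
    intro d hd d' hd' hne z hz hz'
    have hedge : d.edge ≠ d'.edge := fun h =>
      hne (List.inj_on_of_nodup_map ht.edges_nodup hd hd' h)
    have hzd : z ∈ s(d.fst, d.snd) := hB _ (List.mem_map_of_mem hd) _ (List.mem_map_of_mem hd')
      hedge z ((hf d hd).2 z (List.mem_of_mem_tail hz))
      ((hf d' hd').2 z (List.mem_of_mem_tail hz'))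
    rcases Sym2.mem_iff.mp hzd with rfl | rfl
    · have := (hf d hd).1.support_nodup
      rw [← cons_tail_support, List.nodup_cons] at this
      exact absurd hz this.1
    · rfl
  rw [support_tail_expand, List.nodup_flatMap]
  refine ⟨fun d hd => (hf d hd).1.support_nodup.sublist (List.tail_sublist _),
    (ht.edges_nodup.of_map _).pairwise_of_forall_ne fun d hd d' hd' hne z hz hz' => ?_⟩
  -- two distinct darts of `q` cannot share their end vertex, as `q.support.tail` is duplicate-free
  refine hne (List.inj_on_of_nodup_map (f := fun d : G.Dart => d.snd) (by rwa [map_snd_darts])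
    hd hd' ?_)
  exact (hsnd d hd d' hd' hne z hz hz').symm.trans (hsnd d' hd' d hd hne.symm z hz' hz)

lemma isChordless_expand {q : G.Walk u v} (ht : q.IsTrail)
    (hB : ∀ e ∈ q.edges, ∀ e' ∈ q.edges, e ≠ e' →
      ∀ x ∈ B e, ∀ y ∈ B e', Γ.Adj x y → x ∈ e' ∨ y ∈ e)
    (hf : ∀ d ∈ q.darts, (f d).IsChordless ∧ ∀ z ∈ (f d).support, z ∈ B d.edge) :
    (q.expand f).IsChordless := by
  rw [isChordless_iff_forall_mem_edges]
  intro x y hx hy hxy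
  have hq : ¬ q.Nil := fun hq => by cases hq; simp_all
  have hsub : ∀ d ∈ q.darts, (f d).edges ⊆ (q.expand f).edges := fun d hd p hp => by
    rw [edges_expand]; exact List.mem_flatMap.mpr ⟨d, hd, hp⟩
  obtain ⟨d, hd, hxd⟩ := exists_mem_support_of_mem_support_expand f hq hx
  obtain ⟨d', hd', hyd'⟩ := exists_mem_support_of_mem_support_expand f hq hy
  by_cases hdd : d.edge = d'.edge
  · obtain rfl := List.inj_on_of_nodup_map ht.edges_nodup hd hd' hdd
    exact hsub d hd ((hf d hd).1.mem_edges hxd hyd' hxy)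
  rcases hB _ (List.mem_map_of_mem hd) _ (List.mem_map_of_mem hd') hdd x ((hf d hd).2 x hxd)
    y ((hf d' hd').2 y hyd') hxy with hx' | hy'
  · exact hsub d' hd' ((hf d' hd').1.mem_edges (mem_support_of_mem_sym2 hx') hyd' hxy)
  · exact hsub d hd ((hf d hd).1.mem_edges hxd (mem_support_of_mem_sym2 hy') hxy)

lemma isCycle_of_nodup_support_tail {p : G.Walk u u} (hp : p.support.tail.Nodup)
    (hl : 3 ≤ p.length) : p.IsCycle := by
  refine isCycle_iff_isPath_tail_and_le_length.mpr ⟨?_, hl⟩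
  rw [isPath_def, support_tail_of_not_nil _ fun h => by rw [← length_eq_zero_iff] at h; omega]
  exact hp

lemma IsCycle.exists_isChordless_of_arcs {q : G.Walk u u} (hq : q.IsCycle) {E : Set (Sym2 V)}
    (hB : ∀ e ∈ q.edges, ∀ e' ∈ q.edges, e ≠ e' → ∀ z ∈ B e, z ∈ B e' → z ∈ e)
    (hBΓ : ∀ e ∈ q.edges, ∀ e' ∈ q.edges, e ≠ e' →
      ∀ x ∈ B e, ∀ y ∈ B e', Γ.Adj x y → x ∈ e' ∨ y ∈ e)
    {a b : ℕ} (harc : ∀ x y : V, s(x, y) ∈ q.edges → ∀ n, n = a ∨ n = b →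
      ∃ A : Γ.Walk x y, A.IsPath ∧ A.IsChordless ∧ (∀ z ∈ A.support, z ∈ B s(x, y)) ∧
        (∀ p ∈ A.edges, p ∈ E) ∧ A.length = n)
    {m : ℕ} (hm : m ≤ q.length) :
    ∃ W : Γ.Walk u u, W.support.tail.Nodup ∧ W.IsChordless ∧ (∀ p ∈ W.edges, p ∈ E) ∧
      W.length = (q.length - m) * a + m * b := by
  classical
  -- in the graph of the edges of `q`, arcs are available for every dart
  let G' := fromEdgeSet {e | e ∈ q.edges}
  have hqG' : ∀ e ∈ q.edges, e ∈ G'.edgeSet := fun e he => by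
    rw [edgeSet_fromEdgeSet]
    exact ⟨he, G.not_isDiag_of_mem_edgeSet (q.edges_subset_edgeSet he)⟩
  let q' := q.transfer G' hqG'
  have hq' : q'.IsCycle := hq.transfer hqG'
  have hq'e : q'.edges = q.edges := edges_transfer _ _
  have harc' (d : G'.Dart) := harc _ _ ((fromEdgeSet_adj _).mp d.adj).1
  choose short hshort using fun d => harc' d a (.inl rfl)
  choose long hlong using fun d => harc' d b (.inr rfl)
  let arc (d : G'.Dart) := if d ∈ q'.darts.take m then long d else short d
  have hspec (d : G'.Dart) : (arc d).IsPath ∧ (arc d).IsChordless ∧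
      (∀ z ∈ (arc d).support, z ∈ B d.edge) ∧ (∀ p ∈ (arc d).edges, p ∈ E) := by
    unfold arc; split_ifs
    · obtain ⟨hp, hch, hB, hE, -⟩ := hlong d; exact ⟨hp, hch, hB, hE⟩
    · obtain ⟨hp, hch, hB, hE, -⟩ := hshort d; exact ⟨hp, hch, hB, hE⟩
  refine ⟨q'.expand arc, ?_, ?_, ?_, ?_⟩
  · refine nodup_support_tail_expand hq'.isTrail hq'.support_nodup (hq'e ▸ hB)
      fun d _ => ⟨(hspec d).1, (hspec d).2.2.1⟩
  · refine isChordless_expand hq'.isTrail (hq'e ▸ hBΓ)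
      fun d _ => ⟨(hspec d).2.1, (hspec d).2.2.1⟩
  · intro p hp
    rw [edges_expand, List.mem_flatMap] at hp
    obtain ⟨d, -, hp⟩ := hp
    exact (hspec d).2.2.2 p hp
  · have hlen (d : G'.Dart) : (arc d).length = if d ∈ q'.darts.take m then b else a := by
      unfold arc; split_ifs
      exacts [(hlong d).2.2.2.2, (hshort d).2.2.2.2]
    rw [length_expand, List.map_congr_left fun d _ => hlen d,
      List.sum_map_ite_mem_take (hq'.isTrail.edges_nodup.of_map _), length_darts,
      length_transfer, smul_eq_mul, smul_eq_mul, min_eq_left hm]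
    ring

end SimpleGraph.Walk

section GoodCycle

variable {V : Type*} [DecidableEq V] {H : Set (Finset V)} {G : SimpleGraph V}
  {h : Sym2 V → Finset V} {e e' : Sym2 V}

lemma IsGoodPath.mem_of_mem_of_mem {u v : V} {P : G.Walk u v} (hP : IsGoodPath H h P)
    (he : e ∈ P.edges) (he' : e' ∈ P.edges) (hne : e ≠ e') {z : V} (hz : z ∈ h e)
    (hz' : z ∈ h e') : z ∈ e :=
  ((hP.1 e he e' he' hne z).mp ⟨hz, hz'⟩).1

variable {v : V} {Q : G.Walk v v}

lemma IsGoodCycle.exists_isGoodPath (hQ : IsGoodCycle H h Q) (he : e ∈ Q.edges)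
    (he' : e' ∈ Q.edges) :
    ∃ (a b : V) (P : G.Walk a b), IsGoodPath H h P ∧ P.edges ⊆ Q.edges ∧ e ∈ P.edges ∧
      e' ∈ P.edges := by
  obtain ⟨a, ha, b, hb, -, hP, heP, heP'⟩ := hQ.2 e he e' he'
  exact ⟨a, b, _, hP, fun g hg => (Q.rotate_edges a ha).mem_iff.mp
    (Walk.edges_takeUntil_subset_edges _ _ hg), heP, heP'⟩

lemma IsGoodCycle.mem_of_mem_of_mem (hQ : IsGoodCycle H h Q) (he : e ∈ Q.edges)
    (he' : e' ∈ Q.edges) (hne : e ≠ e') {z : V} (hz : z ∈ h e) (hz' : z ∈ h e') :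
    z ∈ e := by
  obtain ⟨a, b, P, hP, -, heP, heP'⟩ := hQ.exists_isGoodPath he he'
  exact hP.mem_of_mem_of_mem heP heP' hne hz hz'

lemma IsGoodCycle.mem_or_mem_of_adj {Γ : SimpleGraph V} (hQ : IsGoodCycle H h Q)
    (hΓ : ∀ x y : V, Γ.Adj x y → ∃ f ∈ H, x ∈ f ∧ y ∈ f)
    (hQΓ : ∀ x y : V, s(x, y) ∈ Q.edges → ¬ Γ.Adj x y)
    (he : e ∈ Q.edges) (he' : e' ∈ Q.edges) (hne : e ≠ e') {x y : V} (hx : x ∈ h e)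
    (hy : y ∈ h e') (hxy : Γ.Adj x y) : x ∈ e' ∨ y ∈ e := by
  obtain ⟨f, hf, hxf, hyf⟩ := hΓ x y hxy
  obtain ⟨a, b, P, hP, hPQ, heP, heP'⟩ := hQ.exists_isGoodPath he he'
  obtain ⟨g, hg, rfl⟩ : ∃ g ∈ P.edges, f = h g := by
    by_contra! hfP
    exact hxy.ne (hP.2 f hf hfP x y hxf hyf ⟨e, heP, hx⟩ ⟨e', heP', hy⟩)
  rcases eq_or_ne g e with rfl | hge
  · exact .inr (hP.mem_of_mem_of_mem heP heP' hne hyf hy)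
  rcases eq_or_ne g e' with rfl | hge'
  · exact .inl (hP.mem_of_mem_of_mem heP' heP hne.symm hxf hx)
  have hg_xy : g = s(x, y) := (Sym2.mem_and_mem_iff hxy.ne).mp
    ⟨hP.mem_of_mem_of_mem hg heP hge hxf hx, hP.mem_of_mem_of_mem hg heP' hge' hyf hy⟩
  exact absurd hxy (hQΓ x y (hg_xy ▸ hPQ hg))

end GoodCycle

theorem good_cycle_to_induced_cycle_even_general {V : Type} [DecidableEq V] (s k : ℕ)
    (H : Set (Finset V))
    (G : SimpleGraph V) (h : Sym2 V → Finset V)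
    (Γ : SimpleGraph V)
    (hΓ : ∀ x y : V, Γ.Adj x y → ∃ f ∈ H, x ∈ f ∧ y ∈ f)
    (c : Sym2 V → Fin k)
    (v : V) (Q : G.Walk v v) (ℓ : ℕ) (hℓ : Q.length = ℓ)
    (hQ : IsGoodCycle H h Q)
    (κ : Fin k)
    (hD : ∀ x y : V, s(x, y) ∈ Q.edges →
      ∃ D : Γ.Walk x x, D.IsCycle ∧ D.length = 6 ∧ D.getVert 2 = y ∧
        (∀ z ∈ D.support, z ∈ h s(x, y)) ∧
        (∀ a ∈ D.support, ∀ b ∈ D.support, Γ.Adj a b → s(a, b) ∈ D.edges) ∧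
        (∀ p ∈ D.edges, c p = κ))
    (t : ℕ) (hte : Even t) (ht1 : 2 * ℓ ≤ t) (ht2 : t ≤ 4 * ℓ) :
    ∃ (a : V) (W : Γ.Walk a a), W.IsCycle ∧ W.length = t ∧
      (∀ p ∈ W.edges, ∀ q ∈ W.edges, c p = c q) ∧
      (∀ x ∈ W.support, ∀ y ∈ W.support, Γ.Adj x y → s(x, y) ∈ W.edges) := by
  obtain ⟨m, hm, rfl⟩ : ∃ m ≤ ℓ, t = 2 * ℓ + 2 * m := by
    obtain ⟨r, rfl⟩ := hte
    exact ⟨r - ℓ, by omega, by omega⟩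
  have harc : ∀ x y : V, s(x, y) ∈ Q.edges → ¬ Γ.Adj x y ∧ ∀ n, n = 2 ∨ n = 4 →
      ∃ A : Γ.Walk x y, A.IsPath ∧ A.IsChordless ∧ (∀ z ∈ A.support, z ∈ h s(x, y)) ∧
        (∀ p ∈ A.edges, c p = κ) ∧ A.length = n := by
    intro x y hxy
    obtain ⟨D, hDc, hDl, rfl, hDh, hDch, hDκ⟩ := hD x y hxy
    replace hDch : D.IsChordless :=
      Walk.isChordless_iff_forall_mem_edges.mpr fun a b ha hb => hDch a ha b hb
    refine ⟨hDc.not_adj_getVert hDch le_rfl (by omega), fun n hn => ?_⟩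
    obtain ⟨A, hAp, hAch, hAs, hAe, hAl⟩ :=
      hDc.exists_isChordless_path hDch le_rfl (by omega) (k := n) (by omega)
    exact ⟨A, hAp, hAch, fun z hz => hDh z (hAs hz), fun p hp => hDκ p (hAe hp), hAl⟩
  obtain ⟨W, hWs, hWch, hWκ, hWl⟩ := hQ.1.exists_isChordless_of_arcs
    (B := fun e => (h e : Set V)) (E := {p | c p = κ})
    (fun e he e' he' hne z => hQ.mem_of_mem_of_mem he he' hne)
    (fun e he e' he' hne x hx y hy =>
      hQ.mem_or_mem_of_adj hΓ (fun x y hxy => (harc x y hxy).1) he he' hne hx hy)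
    (fun x y hxy => (harc x y hxy).2) (hℓ ▸ hm)
  have hℓ3 : 3 ≤ ℓ := hℓ ▸ hQ.1.three_le_length
  refine ⟨v, W, Walk.isCycle_of_nodup_support_tail hWs (by omega), by omega,
    fun p hp q hq => (hWκ p hp).trans (hWκ q hq).symm, fun x hx y hy => hWch.mem_edges hx hy⟩

/-- Lemma 5.6 part 1) of the paper: given a good cycle of length `ℓ` in the auxiliary
graph `G`, each of whose edges comes from a monochromatic induced `6`-cycle (of one
common color) inside its assigned hyperedge with the two endpoints at distance `2`
on that `6`-cycle, the host graph `Γ` contains a monochromatic induced cycle of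
length `t` for every even `t` with `2ℓ ≤ t ≤ 4ℓ`. -/
theorem good_cycle_to_induced_cycle_even {V : Type} [DecidableEq V] (s k : ℕ)
    (H : Set (Finset V))
    (huniform : ∀ e ∈ H, e.card = s)
    (hlinear : ∀ e ∈ H, ∀ f ∈ H, e ≠ f → (e ∩ f).card ≤ 1)
    (G : SimpleGraph V) (h : Sym2 V → Finset V)
    (hmem : ∀ e ∈ G.edgeSet, h e ∈ H ∧ ∀ x ∈ e, x ∈ h e)
    (hinj : Set.InjOn h G.edgeSet)
    (Γ : SimpleGraph V)
    (hΓ : ∀ x y : V, Γ.Adj x y → ∃ f ∈ H, x ∈ f ∧ y ∈ f)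
    (c : Sym2 V → Fin k)
    (v : V) (Q : G.Walk v v) (ℓ : ℕ) (hℓ : Q.length = ℓ)
    (hQ : IsGoodCycle H h Q)
    (κ : Fin k)
    (hD : ∀ x y : V, s(x, y) ∈ Q.edges →
      ∃ D : Γ.Walk x x, D.IsCycle ∧ D.length = 6 ∧ D.getVert 2 = y ∧
        (∀ z ∈ D.support, z ∈ h s(x, y)) ∧
        (∀ a ∈ D.support, ∀ b ∈ D.support, Γ.Adj a b → s(a, b) ∈ D.edges) ∧
        (∀ p ∈ D.edges, c p = κ))
    (t : ℕ) (hte : Even t) (ht1 : 2 * ℓ ≤ t) (ht2 : t ≤ 4 * ℓ) :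
    ∃ (a : V) (W : Γ.Walk a a), W.IsCycle ∧ W.length = t ∧
      (∀ p ∈ W.edges, ∀ q ∈ W.edges, c p = c q) ∧
      (∀ x ∈ W.support, ∀ y ∈ W.support, Γ.Adj x y → s(x, y) ∈ W.edges) :=
  good_cycle_to_induced_cycle_even_general s k H G h Γ hΓ c v Q ℓ hℓ hQ κ hD t hte ht1 ht2
end

section
/- Let L ≥ 3 be an odd integer. Let H be a linear s-uniform hypergraph on a vertex set V, let G be a graph on V with an injective map h from the edge set of G to the hyperedges of H such that both endpoints of each edge e of G lie in h(e), and let Γ be a graph on V. Let the edges of Γ be colored with k colors. Suppose Q = v_0 v_1 … v_{ℓ−1} is a good cycle of length ℓ in G such that for every edge v_i v_{i+1} of Q there is a cycle D_i of length L in Γ, all of whose vertices lie in h(v_i v_{i+1}), on which v_i and v_{i+1} are at distance (L−1)/2, and such that all edges of all the cycles D_i receive the same color. Then for every integer t with (L−1)ℓ/2 ≤ t ≤ (L+1)ℓ/2, Γ contains a monochromatic cycle of length t. -/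
open SimpleGraph

/-!
Write `L = 2j + 1`. The cycle `D` attached to an edge `xy` of `Q` splits into two monochromatic
`x`–`y` paths inside `h(xy)`, of lengths `j` and `j + 1`. Replacing every edge of `Q` by one of
them, the long one on exactly `n` edges, gives a closed walk of length `jℓ + n` for any `n ≤ ℓ`.
It is a cycle because, `Q` being good, the hyperedges of two distinct edges of `Q` meet only in a
common endpoint.
-/

namespace SimpleGraph

variable {V : Type*} {G Γ : SimpleGraph V}

namespace Walk

lemma IsPath.start_notMem_support_tail {u v : V} {p : G.Walk u v} (hp : p.IsPath) :
    u ∉ p.support.tail := by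
  have := hp.support_nodup
  rw [← cons_tail_support] at this
  exact (List.nodup_cons.1 this).1

lemma IsPath.append {u v w : V} {p : G.Walk u v} {q : G.Walk v w} (hp : p.IsPath)
    (hq : q.IsPath) (h : ∀ z ∈ p.support, z ∈ q.support → z = v) : (p.append q).IsPath := by
  rw [isPath_def, support_append]
  refine List.Nodup.append hp.support_nodup (hq.support_nodup.sublist (List.tail_sublist _)) ?_
  intro z hz hz'
  obtain rfl := h z hz (List.mem_of_mem_tail hz')
  exact hq.start_notMem_support_tail hz'

lemma IsCycle.exists_isPath_of_getVert_eq {x y : V} {D : G.Walk x x} (hD : D.IsCycle) {n r : ℕ}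
    (hn₀ : 0 < n) (hn : n < D.length) (hy : D.getVert n = y) (hr : r = n ∨ r = D.length - n) :
    ∃ p : G.Walk x y, p.IsPath ∧ p.length = r ∧ p.support ⊆ D.support ∧ p.edges ⊆ D.edges := by
  subst hy
  rcases hr with rfl | rfl
  · exact ⟨D.take r, hD.isPath_take hn, by simp [take_length]; omega,
      (D.isSubwalk_take r).support_subset, (D.isSubwalk_take r).edges_subset⟩
  · have hend : D.reverse.getVert (D.length - n) = D.getVert n := by
      rw [getVert_reverse]; congr 1; omega
    have hsub := D.reverse.isSubwalk_take (D.length - n)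
    refine ⟨(D.reverse.take (D.length - n)).copy rfl hend,
      by simpa using hD.reverse.isPath_take (by simp; omega), by simp [take_length], ?_, ?_⟩
    · intro z hz
      simpa using hsub.support_subset (by simpa using hz)
    · intro e he
      simpa using hsub.edges_subset (by simpa using he)

end Walk

/-- Each edge of `S` lies in its set `h e`, and the sets of distinct edges meet only in common
endpoints: condition (i) of a good path. -/
structure IsInflation (h : Sym2 V → Set V) (S : Set (Sym2 V)) : Prop where
  subset : ∀ e ∈ S, ∀ z ∈ e, z ∈ h e
  mem_of_mem_of_mem : ∀ e ∈ S, ∀ e' ∈ S, e ≠ e' → ∀ z ∈ h e, z ∈ h e' → z ∈ e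

namespace IsInflation

open Walk

variable {h : Sym2 V → Set V} {S : Set (Sym2 V)}

lemma mem_and_mem_support (hh : IsInflation h S) {a w : V} {W : G.Walk a w}
    (hWS : ∀ e ∈ W.edges, e ∈ S) {e₀ : Sym2 V} (he₀ : e₀ ∈ S) (he₀W : e₀ ∉ W.edges)
    (ha : a ∈ e₀) {z : V} (hz : z ∈ h e₀) (hzW : z = w ∨ ∃ e ∈ W.edges, z ∈ h e) :
    z ∈ e₀ ∧ z ∈ W.support := by
  have key : ∀ e ∈ W.edges, z ∈ h e → z ∈ e₀ ∧ z ∈ W.support := fun e he hze =>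
    have hne : e₀ ≠ e := fun h' => he₀W (h' ▸ he)
    ⟨hh.mem_of_mem_of_mem e₀ he₀ e (hWS e he) hne z hz hze, mem_support_iff_exists_mem_edges.2
      (Or.inr ⟨e, he, hh.mem_of_mem_of_mem e (hWS e he) e₀ he₀ hne.symm z hze hz⟩)⟩
  rcases hzW with rfl | ⟨e, he, hze⟩
  · by_cases hW : W.Nil
    · exact ⟨hW.eq ▸ ha, W.end_mem_support⟩
    · obtain ⟨e, he, hze⟩ := (mem_support_iff_exists_mem_edges_of_not_nil hW).1 W.end_mem_support
      exact key e he (hh.subset e (hWS e he) z hze)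
  · exact key e he hze

lemma exists_isPath_length_eq (hh : IsInflation h S) {m : ℕ}
    (harc : ∀ x y, s(x, y) ∈ S → ∀ i ≤ 1,
      ∃ p : Γ.Walk x y, p.IsPath ∧ p.length = m + i ∧ ∀ z ∈ p.support, z ∈ h s(x, y))
    {u w : V} {W : G.Walk u w} (hW : W.IsPath) (hWS : ∀ e ∈ W.edges, e ∈ S) {n : ℕ}
    (hn : n ≤ W.length) :
    ∃ P : Γ.Walk u w, P.IsPath ∧ P.length = m * W.length + n ∧
      ∀ z ∈ P.support, z = w ∨ ∃ e ∈ W.edges, z ∈ h e := by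
  induction W generalizing n with
  | nil => exact ⟨nil, .nil, by simp_all, by simp⟩
  | @cons u u₁ w _ W ih =>
    obtain ⟨hWpath, hu⟩ := (cons_isPath_iff _ _).1 hW
    have he₀ : s(u, u₁) ∈ S := hWS _ (by simp)
    have hWS' : ∀ e ∈ W.edges, e ∈ S := fun e he => hWS e (by simp [he])
    obtain ⟨i, n', hi, hn', rfl⟩ : ∃ i n', i ≤ 1 ∧ n' ≤ W.length ∧ n = i + n' :=
      ⟨min n 1, n - min n 1, by omega, by simp at hn; omega, by omega⟩
    obtain ⟨arc, harcP, harcLen, harcH⟩ := harc u u₁ he₀ i hi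
    obtain ⟨P, hP, hPLen, hPH⟩ := ih hWpath hWS' hn'
    refine ⟨arc.append P, harcP.append hP fun z hz hz' => ?_, ?_, fun z hz => ?_⟩
    · obtain ⟨hze, hzW⟩ := hh.mem_and_mem_support hWS' he₀
        (fun he => hu (W.fst_mem_support_of_mem_edges he)) (Sym2.mem_mk_right u u₁)
        (harcH z hz) (hPH z hz')
      rcases Sym2.mem_iff.1 hze with rfl | rfl
      · exact absurd hzW hu
      · rfl
    · simp only [length_append, length_cons, harcLen, hPLen]
      ring
    · rcases (mem_support_append_iff _ _).1 hz with hz | hz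
      · exact Or.inr ⟨_, by simp, harcH z hz⟩
      · rcases hPH z hz with rfl | ⟨e, he, hze⟩
        · exact Or.inl rfl
        · exact Or.inr ⟨e, by simp [he], hze⟩

lemma exists_isCycle_length_eq (hh : IsInflation h S) {m : ℕ} (hm : 1 ≤ m)
    (harc : ∀ x y, s(x, y) ∈ S → ∀ i ≤ 1,
      ∃ p : Γ.Walk x y, p.IsPath ∧ p.length = m + i ∧ ∀ z ∈ p.support, z ∈ h s(x, y))
    {v : V} {Q : G.Walk v v} (hQ : Q.IsCycle) (hQS : ∀ e ∈ Q.edges, e ∈ S) {n : ℕ}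
    (hn : n ≤ Q.length) :
    ∃ C : Γ.Walk v v, C.IsCycle ∧ C.length = m * Q.length + n := by
  cases Q with
  | nil => exact absurd hQ (by simp)
  | @cons _ v₁ _ _ W =>
    obtain ⟨hW, he₀W⟩ := (cons_isCycle_iff _ _).1 hQ
    have hWlen : 2 ≤ W.length := by simpa using hQ.three_le_length
    have he₀ : s(v, v₁) ∈ S := hQS _ (by simp)
    have hWS : ∀ e ∈ W.edges, e ∈ S := fun e he => hQS e (by simp [he])
    obtain ⟨i, n', hi, hn', rfl⟩ : ∃ i n', i ≤ 1 ∧ n' ≤ W.length ∧ n = i + n' :=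
      ⟨min n 1, n - min n 1, by omega, by simp at hn; omega, by omega⟩
    obtain ⟨arc, harcP, harcLen, harcH⟩ := harc v v₁ he₀ i hi
    obtain ⟨P, hP, hPLen, hPH⟩ := hh.exists_isPath_length_eq harc hW hWS hn'
    refine ⟨arc.append P, harcP.isCycle_append hP (List.disjoint_left.2 fun z hz hz' => ?_)
      (Or.inr ?_), ?_⟩
    · obtain ⟨hze, -⟩ := hh.mem_and_mem_support hWS he₀ he₀W (Sym2.mem_mk_right v v₁)
        (harcH z (List.mem_of_mem_tail hz)) (hPH z (List.mem_of_mem_tail hz'))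
      rcases Sym2.mem_iff.1 hze with rfl | rfl
      · exact harcP.start_notMem_support_tail hz
      · exact hP.start_notMem_support_tail hz'
    · rw [hPLen]
      nlinarith
    · simp only [length_append, length_cons, harcLen, hPLen]
      ring

end IsInflation

end SimpleGraph

lemma IsGoodCycle.isInflation {V : Type*} [DecidableEq V] {H : Set (Finset V)} {G : SimpleGraph V}
    {h : Sym2 V → Finset V} {v : V} {Q : G.Walk v v} (hQ : IsGoodCycle H h Q)
    (hmem : ∀ e ∈ Q.edges, ∀ x ∈ e, x ∈ h e) :
    IsInflation (fun e => (h e : Set V)) {e | e ∈ Q.edges} where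
  subset := hmem
  mem_of_mem_of_mem e he e' he' hne z hz hz' := by
    obtain ⟨_, _, _, _, -, hgood, heP, he'P⟩ := hQ.2 e he e' he'
    exact ((hgood.1 e heP e' he'P hne z).1 ⟨hz, hz'⟩).1

theorem good_cycle_to_cycle_noninduced_general {V : Type} [DecidableEq V] (s k L : ℕ)
    (hL : 3 ≤ L) (hLodd : Odd L)
    (H : Set (Finset V))
    (G : SimpleGraph V) (h : Sym2 V → Finset V)
    (hmem : ∀ e ∈ G.edgeSet, h e ∈ H ∧ ∀ x ∈ e, x ∈ h e)
    (Γ : SimpleGraph V)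
    (c : Sym2 V → Fin k)
    (v : V) (Q : G.Walk v v) (ℓ : ℕ) (hℓ : Q.length = ℓ)
    (hQ : IsGoodCycle H h Q)
    (κ : Fin k)
    (hD : ∀ x y : V, s(x, y) ∈ Q.edges →
      ∃ D : Γ.Walk x x, D.IsCycle ∧ D.length = L ∧ D.getVert ((L - 1) / 2) = y ∧
        (∀ z ∈ D.support, z ∈ h s(x, y)) ∧
        (∀ p ∈ D.edges, c p = κ))
    (t : ℕ) (ht1 : (L - 1) * ℓ ≤ 2 * t) (ht2 : 2 * t ≤ (L + 1) * ℓ) :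
    ∃ (a : V) (W : Γ.Walk a a), W.IsCycle ∧ W.length = t ∧
      (∀ p ∈ W.edges, ∀ q ∈ W.edges, c p = c q) := by
  obtain ⟨j, rfl⟩ := hLodd
  set Γκ := Γ.deleteEdges {p | c p ≠ κ}
  have hκ : ∀ {p}, p ∈ Γκ.edgeSet ↔ p ∈ Γ.edgeSet ∧ c p = κ := by
    simp [Γκ, edgeSet_deleteEdges]
  have harc : ∀ x y, s(x, y) ∈ {e | e ∈ Q.edges} → ∀ i ≤ 1, ∃ p : Γκ.Walk x y,
      p.IsPath ∧ p.length = j + i ∧ ∀ z ∈ p.support, z ∈ (h s(x, y) : Set V) := by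
    intro x y hxy i hi
    obtain ⟨D, hDcyc, hDlen, hDy, hDh, hDκ⟩ := hD x y hxy
    obtain ⟨p, hp, hplen, hpD, hpD'⟩ := hDcyc.exists_isPath_of_getVert_eq (n := j) (r := j + i)
      (by omega) (by omega) (by simpa using hDy) (by omega)
    have hpκ : ∀ e ∈ p.edges, e ∈ Γκ.edgeSet := fun e he =>
      hκ.2 ⟨p.edges_subset_edgeSet he, hDκ e (hpD' he)⟩
    exact ⟨p.transfer Γκ hpκ, hp.transfer hpκ, by simpa using hplen,
      fun z hz => hDh z (hpD (by simpa using hz))⟩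
  obtain ⟨n, rfl, hn⟩ : ∃ n, t = j * ℓ + n ∧ n ≤ ℓ := by
    rw [show (2 * j + 1 - 1) * ℓ = 2 * (j * ℓ) by simp; ring] at ht1
    rw [show (2 * j + 1 + 1) * ℓ = 2 * (j * ℓ + ℓ) by ring] at ht2
    exact ⟨t - j * ℓ, by omega, by omega⟩
  obtain ⟨C, hC, hClen⟩ := (hQ.isInflation fun e he => (hmem e (Q.edges_subset_edgeSet he)).2
    ).exists_isCycle_length_eq (by omega) harc hQ.1 (fun _ => id) (n := n) (by omega)
  refine ⟨v, C.mapLe (Γ.deleteEdges_le _), (Walk.isCycle_mapLe _).2 hC, by simp [hClen, hℓ], ?_⟩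
  intro p hp q hq
  rw [Walk.edges_mapLe_eq_edges] at hp hq
  rw [(hκ.1 (C.edges_subset_edgeSet hp)).2, (hκ.1 (C.edges_subset_edgeSet hq)).2]

/-- Lemma 5.6 part 3) of the paper: let `L ≥ 3` be odd. Given a good cycle of length
`ℓ` in the auxiliary graph `G`, each of whose edges comes from a monochromatic
`L`-cycle (of one common color) inside its assigned hyperedge with the two endpoints
at distance `(L-1)/2` on that `L`-cycle, the graph `Γ` contains a monochromatic cycle
of length `t` for every `t` with `(L-1)ℓ/2 ≤ t ≤ (L+1)ℓ/2`. -/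
theorem good_cycle_to_cycle_noninduced {V : Type} [DecidableEq V] (s k L : ℕ)
    (hL : 3 ≤ L) (hLodd : Odd L)
    (H : Set (Finset V))
    (huniform : ∀ e ∈ H, e.card = s)
    (hlinear : ∀ e ∈ H, ∀ f ∈ H, e ≠ f → (e ∩ f).card ≤ 1)
    (G : SimpleGraph V) (h : Sym2 V → Finset V)
    (hmem : ∀ e ∈ G.edgeSet, h e ∈ H ∧ ∀ x ∈ e, x ∈ h e)
    (hinj : Set.InjOn h G.edgeSet)
    (Γ : SimpleGraph V)
    (c : Sym2 V → Fin k)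
    (v : V) (Q : G.Walk v v) (ℓ : ℕ) (hℓ : Q.length = ℓ)
    (hQ : IsGoodCycle H h Q)
    (κ : Fin k)
    (hD : ∀ x y : V, s(x, y) ∈ Q.edges →
      ∃ D : Γ.Walk x x, D.IsCycle ∧ D.length = L ∧ D.getVert ((L - 1) / 2) = y ∧
        (∀ z ∈ D.support, z ∈ h s(x, y)) ∧
        (∀ p ∈ D.edges, c p = κ))
    (t : ℕ) (ht1 : (L - 1) * ℓ ≤ 2 * t) (ht2 : 2 * t ≤ (L + 1) * ℓ) :
    ∃ (a : V) (W : Γ.Walk a a), W.IsCycle ∧ W.length = t ∧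
      (∀ p ∈ W.edges, ∀ q ∈ W.edges, c p = c q) :=
  good_cycle_to_cycle_noninduced_general s k L hL hLodd H G h hmem Γ c v Q ℓ hℓ hQ κ hD t ht1 ht2
end
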